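/- For an n-partite pure state ρ on (ℂ^d)^{⊗n} with n ≥ 3, the full n-body correlation tensor satisfies ‖T^{(1⋯n)}‖² ≤ (2/d)ⁿ · ((n−2)dⁿ − n d^{n−2} + 2)/(n−2). -/

import Mathlib

open Matrix BigOperators
open scoped ComplexOrder

/-!
Adjoin `λ₀ = √(2/d) • 1` to the generators: the `d²` matrices `λ_i` then satisfy
`tr (λ_i λ_j) = 2 δ_ij`, hence the completeness relation `Σ_i (λ_i)_pq (λ_i)_rs = 2 δ_qr δ_ps`.
For the correlations `t_a = tr (ρ ⊗_k λ_{a_k})` this gives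
`Σ_{supp a ⊆ A} t_a² = 2^|A| (2/d)^(n-|A|) tr ρ_A²`. A pure state has `tr ρ² = 1` and
`tr ρ_A² = tr ρ_Ā²`, so `Σ_a t_a² = 2ⁿ` and, for every site `j`, the sum over the `a` with
`a_j = 0` is `d^(n-2)` times the sum over the `a` supported in `{j}`. Weighting each `a` by
`n - 2 - #{k | a_k = 0} + d^(n-2) #{j | supp a ⊆ {j}}` turns these relations into
`Σ_a w_a t_a² = (n-2) 2ⁿ`. All weights are nonnegative, the fully supported `a` have weight at
least `n - 2`, and `a = 0` has weight `n d^(n-2) - 2` and `t_0² = (2/d)ⁿ`; rearranging gives the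
bound.
-/

namespace Matrix

variable {K : Type*} [Field K] {m κ : Type*} [Fintype m] [DecidableEq m] [Fintype κ]
  [DecidableEq κ]

/-- The square matrix `(v_i)_{pq}` indexed by `κ × (m × m)` has inverse `(v_j)_{qp} / c`, and the
inverse is also a left inverse. -/
theorem sum_apply_mul_apply_of_trace_mul_eq (v : κ → Matrix m m K) {c : K} (hc : c ≠ 0)
    (hcard : Fintype.card κ = Fintype.card m ^ 2)
    (horth : ∀ i j, (v i * v j).trace = if i = j then c else 0) (p q r s : m) :
    ∑ i, v i p q * v i r s = if q = r ∧ p = s then c else 0 := by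
  let V : Matrix κ (m × m) K := of fun i pq => v i pq.1 pq.2
  let W : Matrix (m × m) κ K := of fun pq j => c⁻¹ * v j pq.2 pq.1
  have hVW : V * W = 1 := by
    ext i j
    have horth_ij := horth i j
    simp only [trace, diag, mul_apply] at horth_ij
    simp only [V, W, mul_apply, of_apply, Fintype.sum_prod_type, one_apply]
    calc ∑ x, ∑ y, v i x y * (c⁻¹ * v j y x) = c⁻¹ * ∑ x, ∑ y, v i x y * v j y x := by
          simp only [Finset.mul_sum, mul_left_comm]
      _ = _ := by rw [horth_ij]; split_ifs <;> simp [hc]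
  have hWV := congrFun (congrFun
    ((mul_eq_one_comm_of_card_eq κ (m × m) K (by simp [hcard, sq])).mp hVW) (q, p)) (r, s)
  simp only [V, W, mul_apply, of_apply, one_apply, Prod.mk.injEq] at hWV
  simp_rw [mul_assoc, ← Finset.mul_sum] at hWV
  calc ∑ i, v i p q * v i r s = c * (c⁻¹ * ∑ i, v i p q * v i r s) := by field_simp
    _ = _ := by rw [hWV]; split_ifs <;> simp_all

/-- An idempotent of trace one has rank one, so all its `2 × 2` minors vanish. -/
theorem mul_apply_mul_eq_of_isIdempotentElem [CharZero K] {N : Type*} [Fintype N]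
    [DecidableEq N] {ρ : Matrix N N K} (hidem : ρ * ρ = ρ) (htr : ρ.trace = 1) (x y z w : N) :
    ρ x y * ρ z w = ρ x w * ρ z y := by
  have hproj : IsIdempotentElem (toLin' ρ) := by
    rw [IsIdempotentElem, Module.End.mul_eq_comp, ← toLin'_mul, hidem]
  have hrank : Module.finrank K (LinearMap.range (toLin' ρ)) ≤ 1 := by
    have htrace := (LinearMap.IsIdempotentElem.isProj_range _ hproj).trace
    rw [trace_toLin'_eq, htr] at htrace
    exact (Nat.cast_eq_one.mp htrace.symm).le
  obtain ⟨u, hu⟩ := finrank_le_one_iff.mp hrank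
  have hcol : ∀ y, ∃ c : K, ∀ x, ρ x y = c * (u : N → K) x := by
    intro y
    obtain ⟨c, hc⟩ := hu ⟨ρ *ᵥ Pi.single y 1, LinearMap.mem_range_self _ _⟩
    refine ⟨c, fun x => ?_⟩
    have hcx := congrFun (congrArg Subtype.val hc) x
    simp only [SetLike.val_smul, Pi.smul_apply, smul_eq_mul, mulVec_single_one, col_apply]
      at hcx
    rw [← hcx]
  choose c hc using hcol
  simp only [hc]
  ring

end Matrix

theorem Finset.sum_sum_filter_eq_sum_card_mul {α β : Type*} [Fintype α] [Fintype β]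
    (P : β → α → Prop) [∀ j a, Decidable (P j a)] (s : α → ℝ) :
    ∑ j, ∑ a ∈ univ.filter (P j), s a = ∑ a, ((univ.filter fun j => P j a).card : ℝ) * s a := by
  simp only [Finset.sum_filter]
  rw [Finset.sum_comm]
  simp [Finset.sum_ite, Finset.sum_const]

namespace CorrelationTensor

variable {m σ ι κ : Type*}

section Correlation

variable [Fintype σ]

def piKron {R : Type*} [CommMonoid R] (M : σ → Matrix m m R) : Matrix (σ → m) (σ → m) R :=
  of fun x y => ∏ k, M k (x k) (y k)

theorem piKron_isHermitian {M : σ → Matrix m m ℂ} (hM : ∀ k, (M k).IsHermitian) :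
    (piKron M).IsHermitian := by
  ext x y
  simp only [conjTranspose_apply, piKron, of_apply, star_prod]
  exact Finset.prod_congr rfl fun k _ => (hM k).apply (x k) (y k)

variable [Fintype m] [DecidableEq σ]

noncomputable def correlation (ρ : Matrix (σ → m) (σ → m) ℂ) (e : κ → Matrix m m ℂ)
    (a : σ → κ) : ℂ :=
  (ρ * piKron fun k => e (a k)).trace

theorem correlation_mul_self {ρ : Matrix (σ → m) (σ → m) ℂ} (hρ : ρ.IsHermitian)
    {e : κ → Matrix m m ℂ} (he : ∀ i, (e i).IsHermitian) (a : σ → κ) :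
    correlation ρ e a * correlation ρ e a = ((correlation ρ e a).re ^ 2 : ℝ) := by
  have hreal : star (correlation ρ e a) = correlation ρ e a := by
    rw [correlation, ← trace_conjTranspose, conjTranspose_mul, hρ.eq,
      (piKron_isHermitian fun k => he (a k)).eq, trace_mul_comm]
  push_cast
  rw [Complex.conj_eq_iff_re.mp hreal, sq]

theorem sum_correlation_mul_self (ρ : Matrix (σ → m) (σ → m) ℂ) (e : κ → Matrix m m ℂ)
    (t : σ → Finset κ) :
    ∑ a ∈ Fintype.piFinset t, correlation ρ e a * correlation ρ e a =
      ∑ x, ∑ y, ∑ z, ∑ w, ρ x y * ρ z w *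
        ∏ k, ∑ i ∈ t k, e i (y k) (x k) * e i (w k) (z k) := by
  have hcorr : ∀ a, correlation ρ e a = ∑ x, ∑ y, ρ x y * piKron (fun k => e (a k)) y x := by
    simp [correlation, trace, mul_apply]
  simp only [Finset.prod_univ_sum, Finset.mul_sum, hcorr, Finset.sum_mul, piKron, of_apply]
  rw [Finset.sum_comm]; refine Finset.sum_congr rfl fun x _ => ?_
  rw [Finset.sum_comm]; refine Finset.sum_congr rfl fun y _ => ?_
  rw [Finset.sum_comm]; refine Finset.sum_congr rfl fun z _ => ?_
  rw [Finset.sum_comm]; refine Finset.sum_congr rfl fun w _ => ?_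
  refine Finset.sum_congr rfl fun a _ => ?_
  rw [Finset.prod_mul_distrib]
  ring

/-- `tr (ρ_A ^ 2)` for the reduction `ρ_A` of `ρ` to the sites in `A`. -/
noncomputable def reducedPurity (ρ : Matrix (σ → m) (σ → m) ℂ) (A : Finset σ) : ℂ :=
  ∑ x, ∑ z, ρ x (A.piecewise z x) * ρ z (A.piecewise x z)

theorem reducedPurity_univ (ρ : Matrix (σ → m) (σ → m) ℂ) :
    reducedPurity ρ Finset.univ = (ρ * ρ).trace := by
  simp [reducedPurity, trace, mul_apply]

theorem reducedPurity_compl {ρ : Matrix (σ → m) (σ → m) ℂ}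
    (hρ : ∀ x y z w, ρ x y * ρ z w = ρ x w * ρ z y) (A : Finset σ) :
    reducedPurity ρ Aᶜ = reducedPurity ρ A := by
  refine Finset.sum_congr rfl fun x _ => Finset.sum_congr rfl fun z _ => ?_
  rw [Finset.piecewise_compl, Finset.piecewise_compl, hρ]

end Correlation

section Support

variable [Fintype σ]

def support (a : σ → Option ι) : Finset σ :=
  Finset.univ.filter fun k => (a k).isSome

@[simp]
theorem support_some (b : σ → ι) : support (fun k => some (b k)) = Finset.univ := by
  ext; simp [support]

@[simp]
theorem support_none : support (fun _ : σ => (none : Option ι)) = ∅ := by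
  ext; simp [support]

variable [DecidableEq σ] [Fintype ι]

def supportedOn (A : Finset σ) : Finset (σ → Option ι) :=
  Finset.univ.filter fun a => support a ⊆ A

theorem supportedOn_eq_piFinset (A : Finset σ) :
    supportedOn (ι := ι) A = Fintype.piFinset fun k => if k ∈ A then Finset.univ else {none} := by
  ext a
  simp only [supportedOn, support, Finset.mem_filter, Finset.mem_univ, true_and,
    Finset.subset_iff, Fintype.mem_piFinset]
  refine forall_congr' fun k => ?_
  split_ifs with hk <;> simp [hk, Option.isSome_iff_ne_none]

end Support

section WithIdentity

variable [Fintype m]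

theorem ofReal_sqrt_two_div_card_mul_self :
    ((√(2 / Fintype.card m) : ℝ) : ℂ) * ((√(2 / Fintype.card m) : ℝ) : ℂ) =
      2 / Fintype.card m := by
  rw [← Complex.ofReal_mul, Real.mul_self_sqrt (by positivity)]
  push_cast
  rfl

variable [DecidableEq m]

/-- The scale `√(2/d)` gives the identity the normalization `tr (λ λ) = 2` of the generators. -/
noncomputable def withIdentity (lam : ι → Matrix m m ℂ) : Option ι → Matrix m m ℂ
  | none => ((√(2 / Fintype.card m) : ℝ) : ℂ) • 1
  | some i => lam i

/-- Entrywise form of `Σ_i e_i ⊗ e_i = 2 • SWAP`. -/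
def Completeness [Fintype κ] (e : κ → Matrix m m ℂ) : Prop :=
  ∀ p q r s, ∑ i, e i p q * e i r s = if q = r ∧ p = s then 2 else 0

theorem withIdentity_isHermitian {lam : ι → Matrix m m ℂ} (hherm : ∀ i, (lam i).IsHermitian) :
    ∀ i, (withIdentity lam i).IsHermitian
  | none => by simp [withIdentity, IsHermitian, conjTranspose_smul]
  | some i => hherm i

theorem withIdentity_none_mul_none (lam : ι → Matrix m m ℂ) (p q r s : m) :
    withIdentity lam none p q * withIdentity lam none r s =
      2 / Fintype.card m * if p = q ∧ r = s then 1 else 0 := by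
  simp only [withIdentity, Matrix.smul_apply, one_apply, smul_eq_mul]
  split_ifs <;> simp_all [← ofReal_sqrt_two_div_card_mul_self]

theorem withIdentity_trace_mul [DecidableEq ι] {lam : ι → Matrix m m ℂ}
    (hm : Fintype.card m ≠ 0) (htr : ∀ i, (lam i).trace = 0)
    (horth : ∀ i j, (lam i * lam j).trace = if i = j then 2 else 0) (i j : Option ι) :
    (withIdentity lam i * withIdentity lam j).trace = if i = j then 2 else 0 := by
  rcases i with _ | i <;> rcases j with _ | j
  · simp only [withIdentity, smul_mul_smul, one_mul, trace_smul, trace_one, smul_eq_mul,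
      ofReal_sqrt_two_div_card_mul_self]
    field_simp
    simp
  · simp [withIdentity, htr]
  · simp [withIdentity, htr]
  · simp [withIdentity, horth]

theorem completeness_withIdentity [Fintype ι] [DecidableEq ι] {lam : ι → Matrix m m ℂ}
    (hcard : Fintype.card ι + 1 = Fintype.card m ^ 2) (htr : ∀ i, (lam i).trace = 0)
    (horth : ∀ i j, (lam i * lam j).trace = if i = j then 2 else 0) :
    Completeness (withIdentity lam) := by
  have hm : Fintype.card m ≠ 0 := by rintro h; simp [h] at hcard
  exact sum_apply_mul_apply_of_trace_mul_eq _ two_ne_zero (by simpa using hcard)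
    (withIdentity_trace_mul hm htr horth)

end WithIdentity

section WithIdentityCorrelation

variable [Fintype m] [DecidableEq m] [Fintype σ] [DecidableEq σ]

theorem correlation_withIdentity_some (lam : ι → Matrix m m ℂ) (ρ : Matrix (σ → m) (σ → m) ℂ)
    (b : σ → ι) :
    correlation ρ (withIdentity lam) (fun k => some (b k)) = correlation ρ lam b :=
  rfl

theorem re_correlation_none_sq (lam : ι → Matrix m m ℂ) {ρ : Matrix (σ → m) (σ → m) ℂ}
    (hρ : ρ.trace = 1) :
    (correlation ρ (withIdentity lam) fun _ => none).re ^ 2 =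
      (2 / Fintype.card m) ^ Fintype.card σ := by
  have hkron : (piKron fun _ : σ => withIdentity lam none) =
      ((√(2 / Fintype.card m) ^ Fintype.card σ : ℝ) : ℂ) • 1 := by
    ext x y
    simp only [piKron, withIdentity, of_apply, Matrix.smul_apply, one_apply, smul_eq_mul, mul_ite,
      mul_one, mul_zero, Finset.prod_ite_zero, Finset.mem_univ, forall_const, ← funext_iff,
      Finset.prod_const, Finset.card_univ]
    push_cast
    rfl
  rw [correlation, hkron, Matrix.mul_smul, Matrix.mul_one, trace_smul, hρ, smul_eq_mul, mul_one,
    Complex.ofReal_re, ← pow_mul, mul_comm, pow_mul, Real.sq_sqrt (by positivity)]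

variable [Fintype ι] {lam : ι → Matrix m m ℂ}

theorem sum_supportedOn_correlation_mul_self (hcomplete : Completeness (withIdentity lam))
    (ρ : Matrix (σ → m) (σ → m) ℂ) (A : Finset σ) :
    ∑ a ∈ supportedOn A, correlation ρ (withIdentity lam) a * correlation ρ (withIdentity lam) a =
      2 ^ A.card * (2 / Fintype.card m) ^ Aᶜ.card * reducedPurity ρ A := by
  -- Site by site, the sum over `a` pins `y` and `w` to the swaps of `x` and `z` on `A`.
  have hfactor : ∀ (x y z w : σ → m) k,
      ∑ i ∈ (if k ∈ A then Finset.univ else {none}),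
          withIdentity lam i (y k) (x k) * withIdentity lam i (w k) (z k) =
        (if k ∈ A then (2 : ℂ) else 2 / Fintype.card m) *
          if w k = A.piecewise x z k ∧ y k = A.piecewise z x k then 1 else 0 := by
    intro x y z w k
    by_cases hk : k ∈ A
    · simp only [hk, if_true, hcomplete _ _ _ _, Finset.piecewise_eq_of_mem]
      split_ifs <;> simp_all
    · simp only [hk, if_false, Finset.sum_singleton, withIdentity_none_mul_none]
      split_ifs <;> simp_all
  have hcoef : ∏ k, (if k ∈ A then (2 : ℂ) else 2 / Fintype.card m) =
      2 ^ A.card * (2 / Fintype.card m) ^ Aᶜ.card := by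
    simp [Finset.prod_ite, ← Finset.compl_filter, div_pow]
  rw [supportedOn_eq_piFinset, sum_correlation_mul_self]
  simp only [hfactor, Finset.prod_mul_distrib, hcoef, Fintype.prod_boole]
  simp only [forall_and, ← funext_iff, ite_and, mul_ite, mul_one, mul_zero, Finset.sum_ite_eq',
    Finset.mem_univ, if_true]
  rw [reducedPurity, Finset.mul_sum]
  refine Finset.sum_congr rfl fun x _ => ?_
  rw [Finset.sum_comm, Finset.mul_sum]
  simp only [Finset.sum_ite_eq', Finset.mem_univ, if_true]
  refine Finset.sum_congr rfl fun z _ => ?_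
  ring

variable {ρ : Matrix (σ → m) (σ → m) ℂ}

theorem sum_supportedOn_re_correlation_sq (hcomplete : Completeness (withIdentity lam))
    (hherm : ∀ i, (lam i).IsHermitian) (hρ : ρ.IsHermitian) (A : Finset σ) :
    ((∑ a ∈ supportedOn A, (correlation ρ (withIdentity lam) a).re ^ 2 : ℝ) : ℂ) =
      2 ^ A.card * (2 / Fintype.card m) ^ Aᶜ.card * reducedPurity ρ A := by
  push_cast
  rw [← sum_supportedOn_correlation_mul_self hcomplete]
  simp_rw [correlation_mul_self hρ (withIdentity_isHermitian hherm)]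
  push_cast
  rfl

theorem sum_re_correlation_sq_of_isIdempotent (hcomplete : Completeness (withIdentity lam))
    (hherm : ∀ i, (lam i).IsHermitian) (hρ : ρ.IsHermitian) (hidem : ρ * ρ = ρ)
    (htr : ρ.trace = 1) :
    ∑ a, (correlation ρ (withIdentity lam) a).re ^ 2 = 2 ^ Fintype.card σ := by
  have h := sum_supportedOn_re_correlation_sq hcomplete hherm hρ Finset.univ
  have huniv : supportedOn (ι := ι) (Finset.univ : Finset σ) = Finset.univ := by
    simp [supportedOn]
  rw [huniv, reducedPurity_univ, hidem, htr, Finset.card_univ, Finset.compl_univ,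
    Finset.card_empty, pow_zero, mul_one, mul_one] at h
  exact_mod_cast h

theorem sum_supportedOn_compl_singleton_eq [Nonempty m]
    (hcomplete : Completeness (withIdentity lam)) (hherm : ∀ i, (lam i).IsHermitian)
    (hρ : ρ.IsHermitian) (hidem : ρ * ρ = ρ) (htr : ρ.trace = 1) (hn : 2 ≤ Fintype.card σ)
    (j : σ) :
    ∑ a ∈ supportedOn {j}ᶜ, (correlation ρ (withIdentity lam) a).re ^ 2 =
      (Fintype.card m : ℝ) ^ (Fintype.card σ - 2) *
        ∑ a ∈ supportedOn {j}, (correlation ρ (withIdentity lam) a).re ^ 2 := by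
  have hcompl := sum_supportedOn_re_correlation_sq hcomplete hherm hρ {j}ᶜ
  have hsingle := sum_supportedOn_re_correlation_sq hcomplete hherm hρ {j}
  rw [compl_compl, reducedPurity_compl (mul_apply_mul_eq_of_isIdempotentElem hidem htr)]
    at hcompl
  obtain ⟨k, hk⟩ : ∃ k, Fintype.card σ = k + 2 := ⟨_, (Nat.sub_add_cancel hn).symm⟩
  simp only [Finset.card_compl, Finset.card_singleton, hk, Nat.add_sub_cancel,
    show k + 2 - 1 = k + 1 by omega] at hcompl hsingle ⊢
  have hm : (Fintype.card m : ℂ) ≠ 0 := Nat.cast_ne_zero.mpr Fintype.card_ne_zero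
  apply Complex.ofReal_injective
  push_cast at hcompl hsingle ⊢
  rw [hcompl, hsingle, div_pow, div_pow]
  field_simp
  ring

end WithIdentityCorrelation

section Counting

variable [Fintype σ] [DecidableEq σ] {D : ℝ}

theorem card_sub_two_sub_card_compl_support_add_nonneg (hn : 2 ≤ Fintype.card σ) (hD : 2 ≤ D)
    (a : σ → Option ι) :
    0 ≤ (Fintype.card σ : ℝ) - 2 - (support a)ᶜ.card +
      D * (Finset.univ.filter fun j => support a ⊆ {j}).card := by
  have : Nonempty σ := Fintype.card_pos_iff.mp (by omega)
  have hsolo : (0 : ℝ) ≤ (Finset.univ.filter fun j => support a ⊆ {j}).card := by positivity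
  rcases le_or_gt 2 (support a).card with h | h
  · have hcompl : ((support a)ᶜ.card : ℝ) ≤ Fintype.card σ - 2 := by
      rw [Finset.card_compl, Nat.cast_sub (Finset.card_le_univ _)]
      have : (2 : ℝ) ≤ (support a).card := by exact_mod_cast h
      linarith
    nlinarith
  · obtain ⟨j, hj⟩ := Finset.card_le_one_iff_subset_singleton.mp (Nat.lt_succ_iff.mp h)
    have hsolo : (1 : ℝ) ≤ (Finset.univ.filter fun j => support a ⊆ {j}).card := by
      exact_mod_cast Finset.card_pos.mpr ⟨j, Finset.mem_filter.mpr ⟨Finset.mem_univ _, hj⟩⟩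
    have hcompl : ((support a)ᶜ.card : ℝ) ≤ Fintype.card σ := by
      exact_mod_cast Finset.card_le_univ _
    nlinarith

variable [Fintype ι]

theorem sum_card_compl_support_mul_eq (s : (σ → Option ι) → ℝ)
    (hsite : ∀ j, ∑ a ∈ supportedOn {j}ᶜ, s a = D * ∑ a ∈ supportedOn {j}, s a) :
    ∑ a, ((support a)ᶜ.card : ℝ) * s a =
      D * ∑ a, ((Finset.univ.filter fun j => support a ⊆ {j}).card : ℝ) * s a := by
  have hcount := Finset.sum_congr rfl fun j (_ : j ∈ Finset.univ) => hsite j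
  have hcompl : ∀ a : σ → Option ι, (Finset.univ.filter fun j => j ∉ support a) = (support a)ᶜ :=
    fun a => by ext; simp
  rw [← Finset.mul_sum] at hcount
  simpa only [supportedOn, Finset.sum_sum_filter_eq_sum_card_mul, Finset.subset_compl_singleton,
    hcompl] using hcount

theorem card_sub_two_mul_sum_some_add_le (hn : 2 ≤ Fintype.card σ) (hD : 2 ≤ D)
    (s : (σ → Option ι) → ℝ) (hs : ∀ a, 0 ≤ s a)
    (hsite : ∀ j, ∑ a ∈ supportedOn {j}ᶜ, s a = D * ∑ a ∈ supportedOn {j}, s a) :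
    ((Fintype.card σ : ℝ) - 2) * ∑ b : σ → ι, s (fun k => some (b k)) +
        (Fintype.card σ * D - 2) * s (fun _ => none) ≤
      ((Fintype.card σ : ℝ) - 2) * ∑ a, s a := by
  classical
  have : Nonempty σ := Fintype.card_pos_iff.mp (by omega)
  set n : ℝ := (Fintype.card σ : ℝ)
  set g : (σ → Option ι) → ℝ := fun a =>
    n - 2 - (support a)ᶜ.card + D * (Finset.univ.filter fun j => support a ⊆ {j}).card
  have hg_sum : ∑ a, g a * s a = (n - 2) * ∑ a, s a := by
    simp only [g, sub_mul, add_mul, Finset.sum_add_distrib, Finset.sum_sub_distrib,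
      ← Finset.mul_sum, mul_assoc, sum_card_compl_support_mul_eq s hsite]
    ring
  have hg_some : ∀ b : σ → ι, n - 2 ≤ g fun k => some (b k) := by
    intro b
    simp only [g, support_some, Finset.compl_univ, Finset.card_empty, Nat.cast_zero, sub_zero,
      le_add_iff_nonneg_right]
    positivity
  have hg_none : g (fun _ => none) = n * D - 2 := by
    simp only [g, support_none, Finset.compl_empty, Finset.card_univ, Finset.empty_subset,
      Finset.filter_true]
    ring
  have hnone : (fun _ => none) ∉ Finset.univ.image fun (b : σ → ι) k => some (b k) := by
    simp [funext_iff]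
  calc (n - 2) * ∑ b : σ → ι, s (fun k => some (b k)) + (n * D - 2) * s (fun _ => none)
      ≤ ∑ b : σ → ι, g (fun k => some (b k)) * s (fun k => some (b k)) +
          g (fun _ => none) * s (fun _ => none) := by
        rw [Finset.mul_sum, hg_none]
        gcongr with b
        exacts [hs _, hg_some b]
    _ = ∑ a ∈ insert (fun _ => none) (Finset.univ.image fun (b : σ → ι) k => some (b k)),
          g a * s a := by
        rw [Finset.sum_insert hnone, Finset.sum_image, add_comm]
        intro b _ b' _ h
        funext k
        exact Option.some_injective _ (congrFun h k)
    _ ≤ ∑ a, g a * s a := Finset.sum_le_univ_sum_of_nonneg fun a =>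
        mul_nonneg (card_sub_two_sub_card_compl_support_add_nonneg hn hD a) (hs a)
    _ = (n - 2) * ∑ a, s a := hg_sum

end Counting

end CorrelationTensor

open CorrelationTensor

theorem npartite_pure_correlation_bound
    (n d : ℕ) (hn : 3 ≤ n) (hd : 2 ≤ d)
    (lam : Fin (d ^ 2 - 1) → Matrix (Fin d) (Fin d) ℂ)
    (hherm : ∀ i, (lam i).IsHermitian) (htr : ∀ i, (lam i).trace = 0)
    (horth : ∀ i j, (lam i * lam j).trace = if i = j then 2 else 0)
    (ρ : Matrix (Fin n → Fin d) (Fin n → Fin d) ℂ)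
    (hρ : ρ.PosSemidef) (hρtr : ρ.trace = 1) (hpure : ρ * ρ = ρ) :
    ∑ i : Fin n → Fin (d ^ 2 - 1),
        (Complex.re ((ρ * Matrix.of fun (x y : Fin n → Fin d) => ∏ k, lam (i k) (x k) (y k)).trace)) ^ 2
      ≤ (2 / (d : ℝ)) ^ n *
          (((n : ℝ) - 2) * (d : ℝ) ^ n - (n : ℝ) * (d : ℝ) ^ (n - 2) + 2) / ((n : ℝ) - 2) := by
  have : Nonempty (Fin d) := ⟨⟨0, by omega⟩⟩
  have hcomplete : Completeness (withIdentity lam) :=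
    completeness_withIdentity (by simpa using Nat.sub_add_cancel (Nat.one_le_pow 2 d (by omega)))
      htr horth
  have hD : (2 : ℝ) ≤ (d : ℝ) ^ (n - 2) := by
    calc (2 : ℝ) ≤ d := by exact_mod_cast hd
      _ ≤ (d : ℝ) ^ (n - 2) := le_self_pow₀ (by exact_mod_cast (by omega : 1 ≤ d)) (by omega)
  have hbound := card_sub_two_mul_sum_some_add_le (by simp; omega) (by simpa using hD)
    (fun a => (correlation ρ (withIdentity lam) a).re ^ 2) (fun _ => sq_nonneg _)
    (sum_supportedOn_compl_singleton_eq hcomplete hherm hρ.1 hpure hρtr (by simp; omega))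
  rw [sum_re_correlation_sq_of_isIdempotent hcomplete hherm hρ.1 hpure hρtr,
    re_correlation_none_sq lam hρtr] at hbound
  simp only [correlation_withIdentity_some, Fintype.card_fin] at hbound
  simp only [correlation, piKron] at hbound
  have hscale : (2 / (d : ℝ)) ^ n * (d : ℝ) ^ n = 2 ^ n := by
    rw [← mul_pow, div_mul_cancel₀ _ (by positivity)]
  rw [le_div_iff₀ (sub_pos.mpr (by exact_mod_cast (by omega : 2 < n)))]
  linear_combination hbound - ((n : ℝ) - 2) * hscale
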